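/- Let N_A, N_B ≥ 1, let Ψ_ref ∈ ℂ^{N_A} be a unit vector, and let ψ_1, …, ψ_Q ∈ ℂ^{Fin N_A × Fin N_B} be unit vectors. Then there exist a unitary matrix U indexed by Fin N_A × Fin N_B and unit vectors φ_1, …, φ_Q ∈ ℂ^{N_B} with U ψ_i = Ψ_ref ⊗ φ_i for every i, if and only if the dimension of the complex linear span of {ψ_1, …, ψ_Q} is at most N_B. (A perfect quantum autoencoder can be achieved if and only if the number of linearly independent vectors among the input states is no more than the dimension of the target latent space.) -/

import Mathlib

open Matrix

/-- The tensor (Kronecker) product of vectors: `(x ⊗ y)(a,b) = x a * y b`. -/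
def tensorVec {NA NB : ℕ} (x : Fin NA → ℂ) (y : Fin NB → ℂ) :
    Fin NA × Fin NB → ℂ :=
  fun p => x p.1 * y p.2

/-!
Since `Ψref` is a unit vector, `φ ↦ Ψref ⊗ φ` is an isometry `T : ℂ^{N_B} → ℂ^{N_A × N_B}`.
A unitary is injective, so it carries the span of the `ψ i` isomorphically into the range of `T`,
which has dimension at most `N_B`. Conversely, a span of dimension at most `N_B` embeds
isometrically into `ℂ^{N_B}`; followed by `T` this is an isometry of the span into the range of
`T`, and it extends to an isometry of the whole (finite-dimensional) space, i.e. a unitary.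
The `φ i` are unit vectors because isometries preserve norms.
-/

open Module WithLp

theorem Submodule.finrank_le_of_map_le_range {K V V' M : Type*} [DivisionRing K]
    [AddCommGroup V] [Module K V] [AddCommGroup V'] [Module K V'] [AddCommGroup M] [Module K M]
    [FiniteDimensional K M] {f : V →ₗ[K] V'} (hf : Function.Injective f) (g : M →ₗ[K] V')
    {S : Submodule K V} (h : S.map f ≤ LinearMap.range g) :
    finrank K S ≤ finrank K M :=
  calc finrank K S = finrank K (S.map f) := (S.equivMapOfInjective f hf).finrank_eq
    _ ≤ finrank K (LinearMap.range g) := Submodule.finrank_mono h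
    _ ≤ finrank K M := LinearMap.finrank_range_le g

theorem EuclideanSpace.inner_eq_star_dotProduct' {𝕜 ι : Type*} [RCLike 𝕜] [Fintype ι]
    (x y : EuclideanSpace 𝕜 ι) : inner 𝕜 x y = star (ofLp x) ⬝ᵥ ofLp y :=
  dotProduct_comm _ _

theorem nonempty_linearIsometry_of_finrank_le {𝕜 F G : Type*} [RCLike 𝕜]
    [NormedAddCommGroup F] [InnerProductSpace 𝕜 F] [FiniteDimensional 𝕜 F]
    [NormedAddCommGroup G] [InnerProductSpace 𝕜 G] [FiniteDimensional 𝕜 G]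
    (h : finrank 𝕜 F ≤ finrank 𝕜 G) : Nonempty (F →ₗᵢ[𝕜] G) := by
  let b := (stdOrthonormalBasis 𝕜 F).toBasis
  let w := stdOrthonormalBasis 𝕜 G ∘ Fin.castLE h
  have hw : Orthonormal 𝕜 w :=
    (stdOrthonormalBasis 𝕜 G).orthonormal.comp _ (Fin.castLE_injective h)
  refine ⟨(b.constr 𝕜 w).isometryOfOrthonormal (v := b) (by simp [b]) ?_⟩
  rwa [show ⇑(b.constr 𝕜 w) ∘ b = w from funext (b.constr_basis 𝕜 w)]

theorem LinearIsometry.exists_linearIsometryEquiv_mapsTo_range {𝕜 E G : Type*} [RCLike 𝕜]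
    [NormedAddCommGroup E] [InnerProductSpace 𝕜 E] [FiniteDimensional 𝕜 E]
    [NormedAddCommGroup G] [InnerProductSpace 𝕜 G] [FiniteDimensional 𝕜 G]
    (T : G →ₗᵢ[𝕜] E) {S : Submodule 𝕜 E} (h : finrank 𝕜 S ≤ finrank 𝕜 G) :
    ∃ W : E ≃ₗᵢ[𝕜] E, Set.MapsTo W S (Set.range T) := by
  obtain ⟨L⟩ := nonempty_linearIsometry_of_finrank_le h
  exact ⟨(T.comp L).extend.toLinearIsometryEquiv rfl,
    fun x hx => ⟨L ⟨x, hx⟩, ((T.comp L).extend_apply ⟨x, hx⟩).symm⟩⟩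

theorem LinearIsometryEquiv.exists_unitary_mulVec_eq {𝕜 n : Type*} [RCLike 𝕜] [Fintype n]
    [DecidableEq n] (W : EuclideanSpace 𝕜 n ≃ₗᵢ[𝕜] EuclideanSpace 𝕜 n) :
    ∃ U ∈ unitaryGroup n 𝕜, ∀ v, U *ᵥ v = ofLp (W (toLp 2 v)) := by
  refine ⟨(toEuclideanCLM (n := n) (𝕜 := 𝕜)).symm W,
    Unitary.map_mem _ (Unitary.linearIsometryEquiv.symm W).property, fun v => ?_⟩
  rw [← ofLp_toEuclideanCLM, StarAlgEquiv.apply_symm_apply]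
  rfl

section Tensor

variable {NA NB : ℕ}

theorem star_tensorVec_dotProduct_tensorVec (x x' : Fin NA → ℂ) (y y' : Fin NB → ℂ) :
    star (tensorVec x y) ⬝ᵥ tensorVec x' y' = (star x ⬝ᵥ x') * (star y ⬝ᵥ y') := by
  simp only [dotProduct, Pi.star_apply, tensorVec, star_mul', Fintype.sum_prod_type,
    Finset.sum_mul_sum]
  congr! 2 with a b
  ring

def tensorVecLinearMap (x : Fin NA → ℂ) : (Fin NB → ℂ) →ₗ[ℂ] (Fin NA × Fin NB → ℂ) where
  toFun := tensorVec x
  map_add' y z := funext fun p => mul_add (x p.1) (y p.2) (z p.2)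
  map_smul' c y := funext fun p => mul_left_comm (x p.1) c (y p.2)

noncomputable def tensorVecIsometry (x : Fin NA → ℂ) (hx : star x ⬝ᵥ x = 1) :
    EuclideanSpace ℂ (Fin NB) →ₗᵢ[ℂ] EuclideanSpace ℂ (Fin NA × Fin NB) :=
  LinearMap.isometryOfInner
    ((WithLp.linearEquiv 2 ℂ _).symm.toLinearMap ∘ₗ tensorVecLinearMap x ∘ₗ
      (WithLp.linearEquiv 2 ℂ _).toLinearMap)
    fun y z => by
      simp only [EuclideanSpace.inner_eq_star_dotProduct']
      exact (star_tensorVec_dotProduct_tensorVec x x _ _).trans (by rw [hx, one_mul]; rfl)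

theorem ofLp_tensorVecIsometry (x : Fin NA → ℂ) (hx : star x ⬝ᵥ x = 1)
    (y : EuclideanSpace ℂ (Fin NB)) : ofLp (tensorVecIsometry x hx y) = tensorVec x (ofLp y) :=
  rfl

end Tensor

theorem perfect_autoencoder_iff_span_le_latent_dim_general
    (NA NB Q : ℕ)
    (Ψref : Fin NA → ℂ) (href : star Ψref ⬝ᵥ Ψref = 1)
    (ψ : Fin Q → (Fin NA × Fin NB → ℂ))
    (hψ : ∀ i, star (ψ i) ⬝ᵥ ψ i = 1) :
    (∃ U : Matrix (Fin NA × Fin NB) (Fin NA × Fin NB) ℂ,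
        U * Uᴴ = 1 ∧ Uᴴ * U = 1 ∧
        ∀ i, ∃ φ : Fin NB → ℂ, star φ ⬝ᵥ φ = 1 ∧ U *ᵥ ψ i = tensorVec Ψref φ)
      ↔ Module.finrank ℂ (Submodule.span ℂ (Set.range ψ)) ≤ NB := by
  constructor
  · rintro ⟨U, -, hU'U, hφ⟩
    choose φ _ hφ using hφ
    have hU : Function.Injective U.mulVecLin :=
      Function.LeftInverse.injective (g := (Uᴴ *ᵥ ·)) fun v => by simp [mulVec_mulVec, hU'U]
    simpa using Submodule.finrank_le_of_map_le_range hU (tensorVecLinearMap Ψref)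
      ((Submodule.map_span_le _ _ _).mpr <| Set.forall_mem_range.mpr fun i => ⟨φ i, (hφ i).symm⟩)
  · intro hrank
    let T := tensorVecIsometry (NB := NB) Ψref href
    let S := (Submodule.span ℂ (Set.range ψ)).map
      (WithLp.linearEquiv 2 ℂ (Fin NA × Fin NB → ℂ)).symm.toLinearMap
    obtain ⟨W, hW⟩ := T.exists_linearIsometryEquiv_mapsTo_range (S := S)
      (by simpa [S, LinearEquiv.finrank_map_eq] using hrank)
    obtain ⟨U, hU, hUW⟩ := W.exists_unitary_mulVec_eq
    refine ⟨U, Unitary.mul_star_self_of_mem hU, Unitary.star_mul_self_of_mem hU, fun i => ?_⟩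
    obtain ⟨y, hy⟩ : ∃ y, T y = W (toLp 2 (ψ i)) :=
      hW (Submodule.mem_map_of_mem (Submodule.subset_span ⟨i, rfl⟩))
    refine ⟨ofLp y, ?_, by rw [hUW, ← hy, ofLp_tensorVecIsometry]⟩
    rw [← EuclideanSpace.inner_eq_star_dotProduct', ← T.inner_map_map, hy, W.inner_map_map,
      EuclideanSpace.inner_eq_star_dotProduct']
    exact hψ i

/-- A perfect quantum autoencoder for the unit vectors `ψ_1, …, ψ_Q` (a
unitary `U` and unit vectors `φ_i ∈ ℂ^{N_B}` with `U ψ_i = Ψ_ref ⊗ φ_i` for all `i`) exists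
if and only if the dimension of the complex linear span of `{ψ_1, …, ψ_Q}` is at most `N_B`,
the dimension of the target latent space. -/
theorem perfect_autoencoder_iff_span_le_latent_dim
    (NA NB Q : ℕ) (hNA : 1 ≤ NA) (hNB : 1 ≤ NB)
    (Ψref : Fin NA → ℂ) (href : star Ψref ⬝ᵥ Ψref = 1)
    (ψ : Fin Q → (Fin NA × Fin NB → ℂ))
    (hψ : ∀ i, star (ψ i) ⬝ᵥ ψ i = 1) :
    (∃ U : Matrix (Fin NA × Fin NB) (Fin NA × Fin NB) ℂ,
        U * Uᴴ = 1 ∧ Uᴴ * U = 1 ∧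
        ∀ i, ∃ φ : Fin NB → ℂ, star φ ⬝ᵥ φ = 1 ∧ U *ᵥ ψ i = tensorVec Ψref φ)
      ↔ Module.finrank ℂ (Submodule.span ℂ (Set.range ψ)) ≤ NB :=
  perfect_autoencoder_iff_span_le_latent_dim_general NA NB Q Ψref href ψ hψ
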